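/- arXiv:1608.01532 — 2 statements merged into one kernel-verified Lean document; each statement's English description precedes it below -/
import Mathlib

section
/- For a connected weighted graph, L* satisfies the second-order expansion L* = D^{−1} + D^{−1}AD^{−1} + D^{−1}A L* A D^{−1} − 2 m^{−1} ι_n ι_n'. -/
open Matrix BigOperators

open Classical in
/-- Moore–Penrose pseudoinverse of a real matrix (defined via the four Penrose conditions,
which determine it uniquely; it always exists for real matrices). -/
noncomputable def mpinv {m n : ℕ} (M : Matrix (Fin m) (Fin n) ℝ) : Matrix (Fin n) (Fin m) ℝ :=
  if h : ∃ N : Matrix (Fin n) (Fin m) ℝ,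
      M * N * M = M ∧ N * M * N = N ∧ (M * N)ᵀ = M * N ∧ (N * M)ᵀ = N * M
  then h.choose else 0

/-- The diagonal matrix `D^{-1/2}` for `D = diag d`. -/
noncomputable def dhalfInv {n : ℕ} (d : Fin n → ℝ) : Matrix (Fin n) (Fin n) ℝ :=
  Matrix.diagonal fun i => 1 / Real.sqrt (d i)

/-- The generalized inverse `M* = D^{-1/2} (D^{-1/2} M D^{-1/2})† D^{-1/2}`. -/
noncomputable def gstar {n : ℕ} (d : Fin n → ℝ) (M : Matrix (Fin n) (Fin n) ℝ) :
    Matrix (Fin n) (Fin n) ℝ :=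
  dhalfInv d * mpinv (dhalfInv d * M * dhalfInv d) * dhalfInv d

/-- Connectivity of the weighted graph with adjacency matrix `A`. -/
def Conn {n : ℕ} (A : Matrix (Fin n) (Fin n) ℝ) : Prop :=
  ∀ i j : Fin n, Relation.ReflTransGen (fun a b => A a b ≠ 0) i j

/-!
Put `S = D^{-1/2} L D^{-1/2}` and `u = D^{1/2} ι`, so that `u'u = m`. The quadratic form of `S`
at `x` is `½ Σ a_ij (y_i - y_j)²` with `y = D^{-1/2} x`; so `S` is positive semidefinite,
`S u = 0`, and by connectivity the form vanishes only on multiples of `u`. Hence `S + P` is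
positive definite for the orthogonal projection `P = m⁻¹ u u'`, and the four Penrose conditions
show `S† = (S + P)⁻¹ - P`, with `S S† = S† S = I - P`. Conjugating back gives
`L L* = I - m⁻¹ d ι'` and `L* L = I - m⁻¹ ι d'`. Finally substitute `D⁻¹A = I - D⁻¹L` and
`AD⁻¹ = I - LD⁻¹` into `D⁻¹A L* A D⁻¹` and expand with these two identities and `ι'L = 0`.
-/

theorem mpinv_eq_of_penrose {m n : ℕ} {M : Matrix (Fin m) (Fin n) ℝ} {N : Matrix (Fin n) (Fin m) ℝ}
    (h₁ : M * N * M = M) (h₂ : N * M * N = N) (h₃ : (M * N)ᵀ = M * N)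
    (h₄ : (N * M)ᵀ = N * M) : mpinv M = N := by
  have hex : ∃ N : Matrix (Fin n) (Fin m) ℝ,
      M * N * M = M ∧ N * M * N = N ∧ (M * N)ᵀ = M * N ∧ (N * M)ᵀ = N * M :=
    ⟨N, h₁, h₂, h₃, h₄⟩
  obtain ⟨g₁, g₂, g₃, g₄⟩ := hex.choose_spec
  rw [mpinv, dif_pos hex]
  set G := hex.choose
  have hMG : M * G = M * N :=
    calc M * G = (M * N * M * G)ᵀ := by rw [h₁, g₃]
      _ = (M * G)ᵀ * (M * N)ᵀ := by rw [← transpose_mul]; simp only [Matrix.mul_assoc]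
      _ = M * N := by rw [g₃, h₃, ← Matrix.mul_assoc, g₁]
  have hGM : G * M = N * M :=
    calc G * M = (G * (M * N * M))ᵀ := by rw [h₁, g₄]
      _ = (N * M)ᵀ * (G * M)ᵀ := by rw [← transpose_mul]; simp only [Matrix.mul_assoc]
      _ = N * M := by rw [g₄, h₄, Matrix.mul_assoc, ← Matrix.mul_assoc M, g₁]
  calc G = G * M * G := g₂.symm
    _ = N * M * N := by rw [Matrix.mul_assoc, hMG, ← Matrix.mul_assoc, hGM]
    _ = N := h₂

section Projection

variable {ι R : Type*} [Fintype ι] [CommRing R]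

theorem mul_eq_zero_swap_of_transpose_eq {S P : Matrix ι ι R} (hS : Sᵀ = S) (hP : Pᵀ = P)
    (hSP : S * P = 0) : P * S = 0 := by
  rw [← hS, ← hP, ← transpose_mul, hSP, transpose_zero]

variable [DecidableEq ι]

theorem mul_nonsing_inv_eq_of_mul_eq {A B : Matrix ι ι R} (h : B * A = B) (hA : IsUnit A.det) :
    B * A⁻¹ = B := by
  calc B * A⁻¹ = B * A * A⁻¹ := by rw [h]
    _ = B := mul_nonsing_inv_cancel_right A B hA

theorem nonsing_inv_mul_eq_of_mul_eq {A B : Matrix ι ι R} (h : A * B = B) (hA : IsUnit A.det) :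
    A⁻¹ * B = B := by
  calc A⁻¹ * B = A⁻¹ * (A * B) := by rw [h]
    _ = B := nonsing_inv_mul_cancel_left A B hA

variable {S P : Matrix ι ι R}

theorem mul_inv_add_sub_eq_one_sub (hPP : P * P = P) (hSP : S * P = 0) (hPS : P * S = 0)
    (hT : IsUnit (S + P).det) : S * ((S + P)⁻¹ - P) = 1 - P := by
  have hPTinv : P * (S + P)⁻¹ = P :=
    mul_nonsing_inv_eq_of_mul_eq (by rw [mul_add, hPS, hPP, zero_add]) hT
  calc S * ((S + P)⁻¹ - P) = (S + P) * (S + P)⁻¹ - P * (S + P)⁻¹ - S * P := by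
        rw [mul_sub, add_mul]; abel
    _ = 1 - P := by rw [mul_nonsing_inv _ hT, hPTinv, hSP, sub_zero]

theorem inv_add_sub_mul_eq_one_sub (hPP : P * P = P) (hSP : S * P = 0) (hPS : P * S = 0)
    (hT : IsUnit (S + P).det) : ((S + P)⁻¹ - P) * S = 1 - P := by
  have hTinvP : (S + P)⁻¹ * P = P :=
    nonsing_inv_mul_eq_of_mul_eq (by rw [add_mul, hSP, hPP, zero_add]) hT
  calc ((S + P)⁻¹ - P) * S = (S + P)⁻¹ * (S + P) - (S + P)⁻¹ * P - P * S := by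
        rw [sub_mul, mul_add]; abel
    _ = 1 - P := by rw [nonsing_inv_mul _ hT, hTinvP, hPS, sub_zero]

end Projection

theorem mpinv_eq_inv_add_sub {n : ℕ} {S P : Matrix (Fin n) (Fin n) ℝ} (hS : Sᵀ = S) (hP : Pᵀ = P)
    (hPP : P * P = P) (hSP : S * P = 0) (hT : IsUnit (S + P).det) :
    mpinv S = (S + P)⁻¹ - P := by
  have hPS := mul_eq_zero_swap_of_transpose_eq hS hP hSP
  have hSN := mul_inv_add_sub_eq_one_sub hPP hSP hPS hT
  have hNS := inv_add_sub_mul_eq_one_sub hPP hSP hPS hT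
  have hPN : P * ((S + P)⁻¹ - P) = 0 := by
    rw [mul_sub, hPP, mul_nonsing_inv_eq_of_mul_eq (by rw [mul_add, hPS, hPP, zero_add]) hT,
      sub_self]
  apply mpinv_eq_of_penrose
  · rw [hSN, sub_mul, Matrix.one_mul, hPS, sub_zero]
  · rw [hNS, sub_mul, Matrix.one_mul, hPN, sub_zero]
  · rw [hSN, transpose_sub, transpose_one, hP]
  · rw [hNS, transpose_sub, transpose_one, hP]

theorem mul_mpinv_eq_one_sub {n : ℕ} {S P : Matrix (Fin n) (Fin n) ℝ} (hS : Sᵀ = S) (hP : Pᵀ = P)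
    (hPP : P * P = P) (hSP : S * P = 0) (hT : IsUnit (S + P).det) : S * mpinv S = 1 - P := by
  rw [mpinv_eq_inv_add_sub hS hP hPP hSP hT,
    mul_inv_add_sub_eq_one_sub hPP hSP (mul_eq_zero_swap_of_transpose_eq hS hP hSP) hT]

theorem mpinv_mul_eq_one_sub {n : ℕ} {S P : Matrix (Fin n) (Fin n) ℝ} (hS : Sᵀ = S) (hP : Pᵀ = P)
    (hPP : P * P = P) (hSP : S * P = 0) (hT : IsUnit (S + P).det) : mpinv S * S = 1 - P := by
  rw [mpinv_eq_inv_add_sub hS hP hPP hSP hT,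
    inv_add_sub_mul_eq_one_sub hPP hSP (mul_eq_zero_swap_of_transpose_eq hS hP hSP) hT]

section RankOne

variable {ι : Type*} [Fintype ι]

theorem transpose_smul_vecMulVec_self {K : Type*} [Field K] (u : ι → K) :
    ((u ⬝ᵥ u)⁻¹ • vecMulVec u u)ᵀ = (u ⬝ᵥ u)⁻¹ • vecMulVec u u := by
  rw [transpose_smul, transpose_vecMulVec]

theorem smul_vecMulVec_self_mul_self {K : Type*} [Field K] (u : ι → K) :
    (u ⬝ᵥ u)⁻¹ • vecMulVec u u * (u ⬝ᵥ u)⁻¹ • vecMulVec u u = (u ⬝ᵥ u)⁻¹ • vecMulVec u u := by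
  rw [smul_mul_smul, vecMulVec_mul_vecMulVec, vecMulVec_smul, smul_smul, mul_assoc,
    mul_comm (u ⬝ᵥ u)⁻¹ (u ⬝ᵥ u), ← mul_assoc]
  simpa using congrArg (· • vecMulVec u u) (mul_inv_mul_cancel (u ⬝ᵥ u)⁻¹)

theorem dotProduct_smul_vecMulVec_self_mulVec (u x : ι → ℝ) :
    x ⬝ᵥ ((u ⬝ᵥ u)⁻¹ • vecMulVec u u) *ᵥ x = (u ⬝ᵥ u)⁻¹ * (u ⬝ᵥ x) ^ 2 := by
  rw [smul_mulVec, vecMulVec_mulVec, dotProduct_smul]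
  simp [dotProduct_comm x u, sq, mul_comm]

theorem posDef_add_smul_vecMulVec_self [DecidableEq ι] {S : Matrix ι ι ℝ} (hS : S.PosSemidef)
    {u : ι → ℝ} (hker : ∀ x, x ⬝ᵥ S *ᵥ x = 0 → u ⬝ᵥ x = 0 → x = 0) :
    (S + (u ⬝ᵥ u)⁻¹ • vecMulVec u u).PosDef := by
  refine PosDef.of_dotProduct_mulVec_pos ?_ fun x hx => ?_
  · refine hS.1.add ?_
    rw [IsHermitian, conjTranspose_eq_transpose_of_trivial, transpose_smul_vecMulVec_self]
  rw [star_trivial, add_mulVec, dotProduct_add, dotProduct_smul_vecMulVec_self_mulVec]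
  have hSx : 0 ≤ x ⬝ᵥ S *ᵥ x := by simpa using hS.dotProduct_mulVec_nonneg x
  have huu : 0 ≤ u ⬝ᵥ u := by simpa using dotProduct_star_self_nonneg u
  by_contra! hle
  have hP : 0 ≤ (u ⬝ᵥ u)⁻¹ * (u ⬝ᵥ x) ^ 2 := mul_nonneg (inv_nonneg.2 huu) (sq_nonneg _)
  have hSx0 : x ⬝ᵥ S *ᵥ x = 0 := by linarith
  have hux : u ⬝ᵥ x = 0 := by
    rcases mul_eq_zero.1 (show (u ⬝ᵥ u)⁻¹ * (u ⬝ᵥ x) ^ 2 = 0 by linarith) with h | h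
    · rw [dotProduct_self_eq_zero.1 (inv_eq_zero.1 h), zero_dotProduct]
    · exact pow_eq_zero_iff two_ne_zero |>.1 h
  exact hx (hker x hSx0 hux)

end RankOne

section Laplacian

variable {ι : Type*} [Fintype ι] [DecidableEq ι] {A : Matrix ι ι ℝ} {d : ι → ℝ}

theorem laplacian_mulVec_one (hdeg : ∀ i, d i = ∑ j, A i j) : (diagonal d - A) *ᵥ 1 = 0 := by
  ext i
  rw [sub_mulVec, Pi.sub_apply, mulVec_diagonal, Pi.one_apply, mul_one, hdeg i]
  simp [mulVec, dotProduct]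

theorem one_vecMul_laplacian (hsym : Aᵀ = A) (hdeg : ∀ i, d i = ∑ j, A i j) :
    1 ᵥ* (diagonal d - A) = 0 := by
  rw [← mulVec_transpose, transpose_sub, diagonal_transpose, hsym, laplacian_mulVec_one hdeg]

theorem two_mul_dotProduct_laplacian_mulVec (hsym : Aᵀ = A) (hdeg : ∀ i, d i = ∑ j, A i j)
    (w : ι → ℝ) :
    2 * (w ⬝ᵥ (diagonal d - A) *ᵥ w) = ∑ i, ∑ j, A i j * (w i - w j) ^ 2 := by
  have hrow : ∑ i, ∑ j, A i j * w i ^ 2 = ∑ i, d i * w i ^ 2 := by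
    simp only [hdeg, Finset.sum_mul]
  have hcol : ∑ i, ∑ j, A i j * w j ^ 2 = ∑ i, d i * w i ^ 2 := by
    rw [Finset.sum_comm, ← hrow]
    refine Finset.sum_congr rfl fun i _ => Finset.sum_congr rfl fun j _ => ?_
    rw [← transpose_apply A i j, hsym]
  have hform : w ⬝ᵥ (diagonal d - A) *ᵥ w
      = ∑ i, d i * w i ^ 2 - ∑ i, ∑ j, A i j * (w i * w j) := by
    rw [sub_mulVec, dotProduct_sub]
    congr 1
    · simp only [dotProduct, mulVec_diagonal]
      exact Finset.sum_congr rfl fun i _ => by ring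
    · simp only [dotProduct, mulVec, Finset.mul_sum]
      exact Finset.sum_congr rfl fun i _ => Finset.sum_congr rfl fun j _ => by ring
  calc 2 * (w ⬝ᵥ (diagonal d - A) *ᵥ w)
      = ∑ i, ∑ j, A i j * w i ^ 2 + ∑ i, ∑ j, A i j * w j ^ 2
        - 2 * ∑ i, ∑ j, A i j * (w i * w j) := by rw [hform, hrow, hcol]; ring
    _ = ∑ i, ∑ j, A i j * (w i - w j) ^ 2 := by
      simp only [Finset.mul_sum, ← Finset.sum_add_distrib, ← Finset.sum_sub_distrib]
      exact Finset.sum_congr rfl fun i _ => Finset.sum_congr rfl fun j _ => by ring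

theorem laplacian_posSemidef (hsym : Aᵀ = A) (hnn : ∀ i j, 0 ≤ A i j)
    (hdeg : ∀ i, d i = ∑ j, A i j) : (diagonal d - A).PosSemidef := by
  refine PosSemidef.of_dotProduct_mulVec_nonneg ?_ fun w => ?_
  · rw [IsHermitian, conjTranspose_eq_transpose_of_trivial, transpose_sub, diagonal_transpose, hsym]
  · have h := two_mul_dotProduct_laplacian_mulVec hsym hdeg w
    have : 0 ≤ ∑ i, ∑ j, A i j * (w i - w j) ^ 2 :=
      Finset.sum_nonneg fun i _ => Finset.sum_nonneg fun j _ => mul_nonneg (hnn i j) (sq_nonneg _)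
    rw [star_trivial]
    linarith

end Laplacian

theorem eq_of_dotProduct_laplacian_mulVec_eq_zero {n : ℕ} {A : Matrix (Fin n) (Fin n) ℝ}
    {d : Fin n → ℝ} (hsym : Aᵀ = A) (hnn : ∀ i j, 0 ≤ A i j) (hdeg : ∀ i, d i = ∑ j, A i j)
    (hconn : Conn A) {w : Fin n → ℝ} (hw : w ⬝ᵥ (diagonal d - A) *ᵥ w = 0) (i j : Fin n) :
    w i = w j := by
  have hsum : ∑ i, ∑ j, A i j * (w i - w j) ^ 2 = 0 := by
    rw [← two_mul_dotProduct_laplacian_mulVec hsym hdeg, hw, mul_zero]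
  have hterm : ∀ i j, A i j * (w i - w j) ^ 2 = 0 := fun i j => by
    have hnn' : ∀ i j, 0 ≤ A i j * (w i - w j) ^ 2 := fun i j =>
      mul_nonneg (hnn i j) (sq_nonneg _)
    rw [Finset.sum_eq_zero_iff_of_nonneg fun i _ => Finset.sum_nonneg fun j _ => hnn' i j] at hsum
    exact (Finset.sum_eq_zero_iff_of_nonneg fun j _ => hnn' i j).1 (hsum i (Finset.mem_univ _)) j
      (Finset.mem_univ _)
  induction hconn i j with
  | refl => rfl
  | @tail k l _ hA ih =>
    have := (mul_eq_zero.1 (hterm k l)).resolve_left hA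
    rw [ih, ← sub_eq_zero, ← pow_eq_zero_iff two_ne_zero, this]

section NormalizedLaplacian

variable {n : ℕ} {A : Matrix (Fin n) (Fin n) ℝ} {d : Fin n → ℝ}

theorem dhalfInv_mul_diagonal_sqrt (hd : ∀ i, 0 < d i) :
    dhalfInv d * diagonal (fun i => √(d i)) = 1 := by
  rw [dhalfInv, diagonal_mul_diagonal, ← diagonal_one]
  congr 1; ext i; exact one_div_mul_cancel (Real.sqrt_pos.2 (hd i)).ne'

theorem diagonal_sqrt_mul_dhalfInv (hd : ∀ i, 0 < d i) :
    diagonal (fun i => √(d i)) * dhalfInv d = 1 := by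
  rw [dhalfInv, diagonal_mul_diagonal, ← diagonal_one]
  congr 1; ext i; exact mul_one_div_cancel (Real.sqrt_pos.2 (hd i)).ne'

theorem dhalfInv_mulVec_sqrt (hd : ∀ i, 0 < d i) : dhalfInv d *ᵥ (fun i => √(d i)) = 1 := by
  ext i; rw [dhalfInv, mulVec_diagonal]; exact one_div_mul_cancel (Real.sqrt_pos.2 (hd i)).ne'

theorem sqrt_vecMul_dhalfInv (hd : ∀ i, 0 < d i) : (fun i => √(d i)) ᵥ* dhalfInv d = 1 := by
  ext i; rw [dhalfInv, vecMul_diagonal]; exact mul_one_div_cancel (Real.sqrt_pos.2 (hd i)).ne'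

theorem diagonal_sqrt_mulVec_sqrt (hd : ∀ i, 0 ≤ d i) :
    diagonal (fun i => √(d i)) *ᵥ (fun i => √(d i)) = d := by
  ext i; rw [mulVec_diagonal]; exact Real.mul_self_sqrt (hd i)

theorem sqrt_vecMul_diagonal_sqrt (hd : ∀ i, 0 ≤ d i) :
    (fun i => √(d i)) ᵥ* diagonal (fun i => √(d i)) = d := by
  ext i; rw [vecMul_diagonal]; exact Real.mul_self_sqrt (hd i)

theorem sqrt_dotProduct_sqrt (hd : ∀ i, 0 ≤ d i) :
    (fun i => √(d i)) ⬝ᵥ (fun i => √(d i)) = ∑ i, d i :=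
  Finset.sum_congr rfl fun i _ => Real.mul_self_sqrt (hd i)

theorem transpose_dhalfInv : (dhalfInv d)ᵀ = dhalfInv d := diagonal_transpose _

theorem normalizedLaplacian_posSemidef (hsym : Aᵀ = A) (hnn : ∀ i j, 0 ≤ A i j)
    (hdeg : ∀ i, d i = ∑ j, A i j) : (dhalfInv d * (diagonal d - A) * dhalfInv d).PosSemidef := by
  simpa [conjTranspose_eq_transpose_of_trivial, transpose_dhalfInv] using
    (laplacian_posSemidef hsym hnn hdeg).conjTranspose_mul_mul_same (dhalfInv d)

theorem transpose_normalizedLaplacian (hsym : Aᵀ = A) :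
    (dhalfInv d * (diagonal d - A) * dhalfInv d)ᵀ = dhalfInv d * (diagonal d - A) * dhalfInv d := by
  rw [transpose_mul, transpose_mul, transpose_dhalfInv, transpose_sub, diagonal_transpose, hsym,
    Matrix.mul_assoc]

theorem normalizedLaplacian_mul_smul_vecMulVec_sqrt (hdeg : ∀ i, d i = ∑ j, A i j)
    (hd : ∀ i, 0 < d i) (c : ℝ) :
    dhalfInv d * (diagonal d - A) * dhalfInv d
      * c • vecMulVec (fun i => √(d i)) (fun i => √(d i)) = 0 := by
  rw [Matrix.mul_smul, mul_vecMulVec, ← mulVec_mulVec, dhalfInv_mulVec_sqrt hd, ← mulVec_mulVec,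
    laplacian_mulVec_one hdeg, mulVec_zero, zero_vecMulVec, smul_zero]

theorem eq_zero_of_dotProduct_normalizedLaplacian_mulVec_eq_zero (hsym : Aᵀ = A)
    (hnn : ∀ i j, 0 ≤ A i j) (hdeg : ∀ i, d i = ∑ j, A i j) (hd : ∀ i, 0 < d i)
    (hconn : Conn A) {x : Fin n → ℝ}
    (hx : x ⬝ᵥ (dhalfInv d * (diagonal d - A) * dhalfInv d) *ᵥ x = 0)
    (hxu : (fun i => √(d i)) ⬝ᵥ x = 0) : x = 0 := by
  set w := dhalfInv d *ᵥ x
  have hw : w ⬝ᵥ (diagonal d - A) *ᵥ w = 0 := by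
    rwa [← mulVec_mulVec, ← mulVec_mulVec, dotProduct_mulVec, ← mulVec_transpose,
      transpose_dhalfInv] at hx
  have hconst := eq_of_dotProduct_laplacian_mulVec_eq_zero hsym hnn hdeg hconn hw
  have hxw : x = diagonal (fun i => √(d i)) *ᵥ w := by
    rw [mulVec_mulVec, diagonal_sqrt_mul_dhalfInv hd, one_mulVec]
  ext i
  have hwi : (∑ j, d j) * w i = 0 := by
    rw [← hxu, hxw, dotProduct_mulVec, Finset.sum_mul]
    refine Finset.sum_congr rfl fun j _ => ?_
    rw [vecMul_diagonal, hconst j i, Real.mul_self_sqrt (hd j).le]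
  have hm : 0 < ∑ j, d j := Finset.sum_pos (fun j _ => hd j) ⟨i, Finset.mem_univ i⟩
  rw [hxw, mulVec_diagonal, (mul_eq_zero.1 hwi).resolve_left hm.ne', mul_zero, Pi.zero_apply]

theorem isUnit_det_normalizedLaplacian_add (hsym : Aᵀ = A) (hnn : ∀ i j, 0 ≤ A i j)
    (hdeg : ∀ i, d i = ∑ j, A i j) (hd : ∀ i, 0 < d i) (hconn : Conn A) :
    IsUnit (dhalfInv d * (diagonal d - A) * dhalfInv d
      + ((fun i => √(d i)) ⬝ᵥ (fun i => √(d i)))⁻¹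
        • vecMulVec (fun i => √(d i)) (fun i => √(d i))).det :=
  (isUnit_iff_isUnit_det _).1 <| PosDef.isUnit <|
    posDef_add_smul_vecMulVec_self (normalizedLaplacian_posSemidef hsym hnn hdeg)
      fun _ hx hxu => eq_zero_of_dotProduct_normalizedLaplacian_mulVec_eq_zero hsym hnn hdeg hd
        hconn hx hxu

theorem laplacian_mul_gstar (hsym : Aᵀ = A) (hnn : ∀ i j, 0 ≤ A i j)
    (hdeg : ∀ i, d i = ∑ j, A i j) (hd : ∀ i, 0 < d i) (hconn : Conn A) :
    (diagonal d - A) * gstar d (diagonal d - A) = 1 - (∑ i, d i)⁻¹ • vecMulVec d 1 := by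
  have hSN := mul_mpinv_eq_one_sub (transpose_normalizedLaplacian hsym)
    (transpose_smul_vecMulVec_self _) (smul_vecMulVec_self_mul_self _)
    (normalizedLaplacian_mul_smul_vecMulVec_sqrt hdeg hd _)
    (isUnit_det_normalizedLaplacian_add hsym hnn hdeg hd hconn)
  set u : Fin n → ℝ := fun i => √(d i)
  calc (diagonal d - A) * gstar d (diagonal d - A)
      = diagonal u * dhalfInv d * (diagonal d - A) * dhalfInv d
          * mpinv (dhalfInv d * (diagonal d - A) * dhalfInv d) * dhalfInv d := by
        rw [diagonal_sqrt_mul_dhalfInv hd, Matrix.one_mul, gstar]; simp only [Matrix.mul_assoc]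
    _ = diagonal u * (1 - (u ⬝ᵥ u)⁻¹ • vecMulVec u u) * dhalfInv d := by
        rw [← hSN]; simp only [Matrix.mul_assoc]
    _ = 1 - (∑ i, d i)⁻¹ • vecMulVec d 1 := by
        rw [mul_sub, sub_mul, Matrix.mul_one, diagonal_sqrt_mul_dhalfInv hd, Matrix.mul_smul,
          smul_mul_assoc, mul_vecMulVec, vecMulVec_mul, diagonal_sqrt_mulVec_sqrt (hd · |>.le),
          sqrt_vecMul_dhalfInv hd, sqrt_dotProduct_sqrt (hd · |>.le)]

theorem gstar_mul_laplacian (hsym : Aᵀ = A) (hnn : ∀ i j, 0 ≤ A i j)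
    (hdeg : ∀ i, d i = ∑ j, A i j) (hd : ∀ i, 0 < d i) (hconn : Conn A) :
    gstar d (diagonal d - A) * (diagonal d - A) = 1 - (∑ i, d i)⁻¹ • vecMulVec 1 d := by
  have hNS := mpinv_mul_eq_one_sub (transpose_normalizedLaplacian hsym)
    (transpose_smul_vecMulVec_self _) (smul_vecMulVec_self_mul_self _)
    (normalizedLaplacian_mul_smul_vecMulVec_sqrt hdeg hd _)
    (isUnit_det_normalizedLaplacian_add hsym hnn hdeg hd hconn)
  set u : Fin n → ℝ := fun i => √(d i)
  calc gstar d (diagonal d - A) * (diagonal d - A)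
      = dhalfInv d * mpinv (dhalfInv d * (diagonal d - A) * dhalfInv d) * dhalfInv d
          * (diagonal d - A) * dhalfInv d * diagonal u := by
        rw [Matrix.mul_assoc _ (dhalfInv d), dhalfInv_mul_diagonal_sqrt hd, Matrix.mul_one, gstar]
    _ = dhalfInv d * (1 - (u ⬝ᵥ u)⁻¹ • vecMulVec u u) * diagonal u := by
        rw [← hNS]; simp only [Matrix.mul_assoc]
    _ = 1 - (∑ i, d i)⁻¹ • vecMulVec 1 d := by
        rw [mul_sub, sub_mul, Matrix.mul_one, dhalfInv_mul_diagonal_sqrt hd, Matrix.mul_smul,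
          smul_mul_assoc, mul_vecMulVec, vecMulVec_mul, dhalfInv_mulVec_sqrt hd,
          sqrt_vecMul_diagonal_sqrt (hd · |>.le), sqrt_dotProduct_sqrt (hd · |>.le)]

end NormalizedLaplacian

theorem second_order_expansion_of_mul_eq {ι K : Type*} [Fintype ι] [DecidableEq ι] [Field K]
    {A G : Matrix ι ι K} {d : ι → K} {c : K} (hd : ∀ i, d i ≠ 0)
    (hL : (1 : ι → K) ᵥ* (diagonal d - A) = 0)
    (hLG : (diagonal d - A) * G = 1 - c • vecMulVec d 1)
    (hGL : G * (diagonal d - A) = 1 - c • vecMulVec 1 d) :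
    G = diagonal (fun i => (d i)⁻¹) + diagonal (fun i => (d i)⁻¹) * A * diagonal (fun i => (d i)⁻¹)
      + diagonal (fun i => (d i)⁻¹) * A * G * A * diagonal (fun i => (d i)⁻¹)
      - (2 * c) • vecMulVec 1 1 := by
  set L := diagonal d - A
  set Di := diagonal (fun i => (d i)⁻¹)
  have hDiD : Di * diagonal d = 1 := by
    rw [diagonal_mul_diagonal, ← diagonal_one]; congr 1; ext i; exact inv_mul_cancel₀ (hd i)
  have hDDi : diagonal d * Di = 1 := by
    rw [diagonal_mul_diagonal, ← diagonal_one]; congr 1; ext i; exact mul_inv_cancel₀ (hd i)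
  have hDiA : Di * A = 1 - Di * L := by rw [mul_sub, hDiD, sub_sub_cancel]
  have hADi : A * Di = 1 - L * Di := by rw [sub_mul, hDDi, sub_sub_cancel]
  have hDid : Di *ᵥ d = 1 := by ext i; simp [Di, mulVec_diagonal, hd i]
  have hdDi : d ᵥ* Di = 1 := by ext i; simp [Di, vecMul_diagonal, hd i]
  have hDiLG : Di * (L * G) = Di - c • vecMulVec 1 1 := by
    rw [hLG, mul_sub, Matrix.mul_one, Matrix.mul_smul, mul_vecMulVec, hDid]
  have hGLDi : G * L * Di = Di - c • vecMulVec 1 1 := by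
    rw [hGL, sub_mul, Matrix.one_mul, smul_mul_assoc, vecMulVec_mul, hdDi]
  have hJL : vecMulVec (1 : ι → K) 1 * L = 0 := by rw [vecMulVec_mul, hL, vecMulVec_zero]
  have hDiLDi : Di * L * Di = Di - Di * A * Di := by
    rw [mul_sub, hDiD, sub_mul, Matrix.one_mul]
  have hDiAGADi : Di * A * G * A * Di = G - Di - Di * A * Di + (2 * c) • vecMulVec 1 1 :=
    calc Di * A * G * A * Di = (Di * A) * G * (A * Di) := by simp only [Matrix.mul_assoc]
      _ = G - Di * (L * G) - G * L * Di + Di * (L * G) * L * Di := by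
        rw [hDiA, hADi]; noncomm_ring
      _ = G - Di - Di * A * Di + (2 * c) • vecMulVec 1 1 := by
        rw [hDiLG, hGLDi, sub_mul, sub_mul, smul_mul_assoc, smul_mul_assoc, hJL, Matrix.zero_mul,
          smul_zero, sub_zero, hDiLDi]
        module
  rw [hDiAGADi]
  abel

theorem stmt9_general {n : ℕ} (A : Matrix (Fin n) (Fin n) ℝ) (hsym : Aᵀ = A)
    (hnn : ∀ i j, 0 ≤ A i j)
    (d : Fin n → ℝ) (hdeg : ∀ i, d i = ∑ j, A i j) (hdpos : ∀ i, 0 < d i)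
    (hconn : Conn A) :
    gstar d (Matrix.diagonal d - A) =
      Matrix.diagonal (fun i => (d i)⁻¹)
      + Matrix.diagonal (fun i => (d i)⁻¹) * A * Matrix.diagonal (fun i => (d i)⁻¹)
      + Matrix.diagonal (fun i => (d i)⁻¹) * A * gstar d (Matrix.diagonal d - A) * A *
          Matrix.diagonal (fun i => (d i)⁻¹)
      - (2 * (∑ i, d i)⁻¹) • vecMulVec (fun _ => (1 : ℝ)) (fun _ => (1 : ℝ)) :=
  second_order_expansion_of_mul_eq (fun i => (hdpos i).ne') (one_vecMul_laplacian hsym hdeg)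
    (laplacian_mul_gstar hsym hnn hdeg hdpos hconn) (gstar_mul_laplacian hsym hnn hdeg hdpos hconn)

/-- second-order expansion
`L* = D⁻¹ + D⁻¹AD⁻¹ + D⁻¹A L* A D⁻¹ - 2m⁻¹ ιι'`, `m = Σᵢ dᵢ`. -/
theorem stmt9 {n : ℕ} (A : Matrix (Fin n) (Fin n) ℝ) (hsym : Aᵀ = A)
    (hnn : ∀ i j, 0 ≤ A i j) (hdiag : ∀ i, A i i = 0)
    (d : Fin n → ℝ) (hdeg : ∀ i, d i = ∑ j, A i j) (hdpos : ∀ i, 0 < d i)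
    (hconn : Conn A) :
    gstar d (Matrix.diagonal d - A) =
      Matrix.diagonal (fun i => (d i)⁻¹)
      + Matrix.diagonal (fun i => (d i)⁻¹) * A * Matrix.diagonal (fun i => (d i)⁻¹)
      + Matrix.diagonal (fun i => (d i)⁻¹) * A * gstar d (Matrix.diagonal d - A) * A *
          Matrix.diagonal (fun i => (d i)⁻¹)
      - (2 * (∑ i, d i)⁻¹) • vecMulVec (fun _ => (1 : ℝ)) (fun _ => (1 : ℝ)) :=
  stmt9_general A hsym hnn d hdeg hdpos hconn
end

section
/- Variance bound for the fixed-effect estimator: for a connected weighted graph and homoskedastic errors u with mean 0 and variance σ²I_m, the estimator α̂ = (B'B)* B'u (plus the true α) satisfies σ²/d_i − 2σ²/m ≤ var(α̂_i) ≤ (σ²/d_i)(1 + 1/(λ₂ h_i)) − 2σ²/m, where h_i = (d_i^{−1} Σ_{j∈[i]} A_{ij}²/d_j)^{−1}. -/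
/-!
Put `S = D^{-1/2} (D - A) D^{-1/2}` (which is `1 - D^{-1/2} A D^{-1/2}`), `N = S†`, `v = √d` and
`e = eᵢ`, so that `var(α̂ᵢ) = σ² Nᵢᵢ / dᵢ`. For symmetric `S`, `S†` is the functional calculus
image of `x ↦ x⁻¹`; hence `N` is symmetric and commutes with `S`, and since connectivity makes
`ker S = span v`, `NS` is the orthogonal projection onto `v^⊥`. Expanding the quadratic form of
`N` at `w = e - Se` gives
  `Nᵢᵢ = wᵀNw + 2 (1 - dᵢ/m) - Sᵢᵢ`,  with `Sᵢᵢ = 1`.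
As `N` maps into `v^⊥`, where `S ≥ λ₂`, one has `λ₂ ‖Nx‖² ≤ xᵀNx`, whence `0 ≤ wᵀNw ≤ ‖w‖²/λ₂`;
and `w = D^{-1/2} A D^{-1/2} e` has `‖w‖² = 1/(dᵢ hᵢ)`.
-/

open Matrix BigOperators

section MoorePenrose

variable {ι κ : Type*} [Fintype ι] [Fintype κ]

def IsMoorePenroseInverse (M : Matrix ι κ ℝ) (N : Matrix κ ι ℝ) : Prop :=
  M * N * M = M ∧ N * M * N = N ∧ (M * N)ᵀ = M * N ∧ (N * M)ᵀ = N * M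

theorem IsMoorePenroseInverse.unique {M : Matrix ι κ ℝ} {N₁ N₂ : Matrix κ ι ℝ}
    (h₁ : IsMoorePenroseInverse M N₁) (h₂ : IsMoorePenroseInverse M N₂) : N₁ = N₂ := by
  obtain ⟨h1, h2, h3, h4⟩ := h₁
  obtain ⟨g1, g2, g3, g4⟩ := h₂
  have hMN : M * N₁ = M * N₂ :=
    calc M * N₁ = (M * N₂ * (M * N₁))ᵀ := by rw [← Matrix.mul_assoc, g1, h3]
      _ = M * N₁ * M * N₂ := by rw [transpose_mul, h3, g3, Matrix.mul_assoc _ M]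
      _ = M * N₂ := by rw [h1]
  have hNM : N₁ * M = N₂ * M :=
    calc N₁ * M = (N₁ * M * (N₂ * M))ᵀ := by rw [Matrix.mul_assoc, ← Matrix.mul_assoc M, g1, h4]
      _ = N₂ * (M * N₁ * M) := by rw [transpose_mul, h4, g4]; simp only [Matrix.mul_assoc]
      _ = N₂ * M := by rw [h1]
  calc N₁ = N₁ * M * N₁ := h2.symm
    _ = N₂ * M * N₂ := by rw [Matrix.mul_assoc, hMN, ← Matrix.mul_assoc, hNM]
    _ = N₂ := g2

variable [DecidableEq ι] {S : Matrix ι ι ℝ}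

theorem cfc_mul_cfc_matrix (f g : ℝ → ℝ) :
    cfc f S * cfc g S = cfc (fun x => f x * g x) S :=
  (cfc_mul f g S (S.finite_spectrum.continuousOn f) (S.finite_spectrum.continuousOn g)).symm

theorem isSymm_cfc (f : ℝ → ℝ) : (cfc f S).IsSymm :=
  isHermitian_iff_isSymm.mp IsSelfAdjoint.cfc

theorem commute_cfc_of_isSymm (hS : S.IsSymm) (f : ℝ → ℝ) : Commute S (cfc f S) := by
  have hid : cfc (fun x : ℝ => x) S = S := cfc_id' ℝ S (isHermitian_iff_isSymm.mpr hS)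
  simpa only [hid] using cfc_commute_cfc (fun x : ℝ => x) f S

theorem isMoorePenroseInverse_cfc_inv (hS : S.IsSymm) :
    IsMoorePenroseInverse S (cfc (·⁻¹ : ℝ → ℝ) S) := by
  have hid : cfc (fun x : ℝ => x) S = S := cfc_id' ℝ S (isHermitian_iff_isSymm.mpr hS)
  set N := cfc (·⁻¹ : ℝ → ℝ) S
  have hsymm : (S * N).IsSymm :=
    isHermitian_iff_isSymm.mp <|
      (IsSelfAdjoint.commute_iff (isHermitian_iff_isSymm.mpr hS) IsSelfAdjoint.cfc).mp
        (commute_cfc_of_isSymm hS _)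
  refine ⟨?_, ?_, hsymm, (commute_cfc_of_isSymm hS _).eq ▸ hsymm⟩
  · calc S * N * S = cfc (fun x : ℝ => x) S * N * cfc (fun x : ℝ => x) S := by rw [hid]
      _ = cfc (fun x : ℝ => x) S := by
          rw [cfc_mul_cfc_matrix, cfc_mul_cfc_matrix]
          exact cfc_congr fun x _ => mul_inv_mul_cancel x
      _ = S := hid
  · calc N * S * N = N * cfc (fun x : ℝ => x) S * N := by rw [hid]
      _ = N := by
          rw [cfc_mul_cfc_matrix, cfc_mul_cfc_matrix]
          exact cfc_congr fun x _ => by simpa using mul_inv_mul_cancel x⁻¹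

end MoorePenrose

theorem mpinv_eq_cfc_inv {n : ℕ} {S : Matrix (Fin n) (Fin n) ℝ} (hS : S.IsSymm) :
    mpinv S = cfc (·⁻¹ : ℝ → ℝ) S := by
  have hex : ∃ N, IsMoorePenroseInverse S N := ⟨_, isMoorePenroseInverse_cfc_inv hS⟩
  unfold IsMoorePenroseInverse at hex
  rw [mpinv, dif_pos hex]
  exact IsMoorePenroseInverse.unique hex.choose_spec (isMoorePenroseInverse_cfc_inv hS)

theorem Matrix.IsSymm.mulVec_dotProduct {ι R : Type*} [Fintype ι] [CommSemiring R]
    {M : Matrix ι ι R} (hM : M.IsSymm) (x y : ι → R) : (M *ᵥ x) ⬝ᵥ y = x ⬝ᵥ (M *ᵥ y) := by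
  rw [dotProduct_mulVec, ← mulVec_transpose, hM]

theorem dotProduct_self_nonneg {ι R : Type*} [Fintype ι] [Ring R] [LinearOrder R]
    [IsStrictOrderedRing R] (x : ι → R) : 0 ≤ x ⬝ᵥ x :=
  Finset.sum_nonneg fun i _ => mul_self_nonneg (x i)

theorem single_dotProduct_mulVec_single {ι R : Type*} [Fintype ι] [DecidableEq ι]
    [NonAssocSemiring R] (M : Matrix ι ι R) (i : ι) :
    Pi.single i 1 ⬝ᵥ (M *ᵥ Pi.single i 1) = M i i := by
  rw [mulVec_single_one, single_dotProduct, one_mul, col_apply]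

theorem mul_dotProduct_self_le_of_mem_lowerBounds {n : ℕ} {S : Matrix (Fin n) (Fin n) ℝ}
    {v : Fin n → ℝ} {lam : ℝ}
    (hlam : lam ∈ lowerBounds {r : ℝ | ∃ x : Fin n → ℝ, x ≠ 0 ∧ v ⬝ᵥ x = 0 ∧
      r = (x ⬝ᵥ (S *ᵥ x)) / (x ⬝ᵥ x)})
    (y : Fin n → ℝ) (hy : v ⬝ᵥ y = 0) : lam * (y ⬝ᵥ y) ≤ y ⬝ᵥ (S *ᵥ y) := by
  rcases eq_or_ne y 0 with rfl | hy0
  · simp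
  have hpos : 0 < y ⬝ᵥ y :=
    (dotProduct_self_nonneg y).lt_of_ne fun h => hy0 (dotProduct_self_eq_zero.mp h.symm)
  exact (le_div_iff₀ hpos).mp (hlam ⟨y, hy0, hy, rfl⟩)

section PseudoinverseQuadraticForm

variable {n : ℕ} {S : Matrix (Fin n) (Fin n) ℝ} (hS : S.IsSymm)
include hS

theorem isMoorePenroseInverse_mpinv : IsMoorePenroseInverse S (mpinv S) :=
  mpinv_eq_cfc_inv hS ▸ isMoorePenroseInverse_cfc_inv hS

theorem isSymm_mpinv : (mpinv S).IsSymm :=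
  mpinv_eq_cfc_inv hS ▸ isSymm_cfc _

theorem commute_mpinv : Commute S (mpinv S) :=
  mpinv_eq_cfc_inv hS ▸ commute_cfc_of_isSymm hS _

theorem mpinv_mulVec_eq_zero {v : Fin n → ℝ} (hSv : S *ᵥ v = 0) : mpinv S *ᵥ v = 0 :=
  calc mpinv S *ᵥ v = (mpinv S * S * mpinv S) *ᵥ v := by rw [(isMoorePenroseInverse_mpinv hS).2.1]
    _ = mpinv S *ᵥ (mpinv S *ᵥ (S *ᵥ v)) := by
        rw [Matrix.mul_assoc, (commute_mpinv hS).eq, ← mulVec_mulVec, ← mulVec_mulVec]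
    _ = 0 := by rw [hSv, mulVec_zero, mulVec_zero]

theorem dotProduct_mpinv_mulVec_eq (x : Fin n → ℝ) :
    x ⬝ᵥ (mpinv S *ᵥ x) = (mpinv S *ᵥ x) ⬝ᵥ (S *ᵥ (mpinv S *ᵥ x)) := by
  rw [(isSymm_mpinv hS).mulVec_dotProduct, mulVec_mulVec, mulVec_mulVec,
    (isMoorePenroseInverse_mpinv hS).2.1]

theorem dotProduct_mpinv_mulVec_sub_mulVec (x : Fin n → ℝ) :
    (x - S *ᵥ x) ⬝ᵥ (mpinv S *ᵥ (x - S *ᵥ x)) =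
      x ⬝ᵥ (mpinv S *ᵥ x) - 2 * (x ⬝ᵥ ((mpinv S * S) *ᵥ x)) + x ⬝ᵥ (S *ᵥ x) := by
  have hcross : (S *ᵥ x) ⬝ᵥ (mpinv S *ᵥ x) = x ⬝ᵥ ((mpinv S * S) *ᵥ x) := by
    rw [hS.mulVec_dotProduct, mulVec_mulVec, (commute_mpinv hS).eq]
  have hsq : (S *ᵥ x) ⬝ᵥ (mpinv S *ᵥ (S *ᵥ x)) = x ⬝ᵥ (S *ᵥ x) := by
    rw [hS.mulVec_dotProduct, mulVec_mulVec, mulVec_mulVec, (isMoorePenroseInverse_mpinv hS).1]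
  rw [mulVec_sub, dotProduct_sub, sub_dotProduct, sub_dotProduct, hcross, hsq,
    mulVec_mulVec]
  ring

variable {v : Fin n → ℝ} (hSv : S *ᵥ v = 0)
include hSv

theorem dotProduct_mpinv_mul_mulVec (hker : ∀ x, S *ᵥ x = 0 → ∃ c : ℝ, x = c • v)
    (x : Fin n → ℝ) : x ⬝ᵥ ((mpinv S * S) *ᵥ x) = x ⬝ᵥ x - (v ⬝ᵥ x) ^ 2 / (v ⬝ᵥ v) := by
  have hP := isMoorePenroseInverse_mpinv hS
  obtain ⟨c, hc⟩ := hker (x - (mpinv S * S) *ᵥ x) (by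
    rw [mulVec_sub, mulVec_mulVec, ← Matrix.mul_assoc, hP.1, sub_self])
  have hPx : (mpinv S * S) *ᵥ x = x - c • v := by rw [← hc, sub_sub_cancel]
  have hvPx : v ⬝ᵥ ((mpinv S * S) *ᵥ x) = 0 := by
    rw [← (show (mpinv S * S).IsSymm from hP.2.2.2).mulVec_dotProduct, ← mulVec_mulVec, hSv,
      mulVec_zero, zero_dotProduct]
  have hvx : v ⬝ᵥ x = c * (v ⬝ᵥ v) := by
    simpa [dotProduct_sub, hvPx] using congrArg (v ⬝ᵥ ·) hc
  rw [hPx, dotProduct_sub, dotProduct_smul, dotProduct_comm x v, hvx, smul_eq_mul]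
  rcases eq_or_ne (v ⬝ᵥ v) 0 with h | h
  · simp [h]
  · field_simp

variable {lam : ℝ} (hlam : ∀ y, v ⬝ᵥ y = 0 → lam * (y ⬝ᵥ y) ≤ y ⬝ᵥ (S *ᵥ y))
include hlam

theorem mul_dotProduct_self_mpinv_mulVec_le (x : Fin n → ℝ) :
    lam * ((mpinv S *ᵥ x) ⬝ᵥ (mpinv S *ᵥ x)) ≤ x ⬝ᵥ (mpinv S *ᵥ x) := by
  rw [dotProduct_mpinv_mulVec_eq hS]
  apply hlam
  rw [← (isSymm_mpinv hS).mulVec_dotProduct, mpinv_mulVec_eq_zero hS hSv, zero_dotProduct]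

theorem dotProduct_mpinv_mulVec_le (hlam0 : 0 < lam) (x : Fin n → ℝ) :
    x ⬝ᵥ (mpinv S *ᵥ x) ≤ (x ⬝ᵥ x) / lam := by
  set u := mpinv S *ᵥ x
  have hu := mul_dotProduct_self_mpinv_mulVec_le hS hSv hlam x
  -- expand `0 ≤ ‖x - lam • u‖²` and use `lam ‖u‖² ≤ ⟪x, u⟫`
  have hexp : (x - lam • u) ⬝ᵥ (x - lam • u) =
      x ⬝ᵥ x - 2 * lam * (x ⬝ᵥ u) + lam * (lam * (u ⬝ᵥ u)) := by
    simp only [dotProduct_sub, sub_dotProduct, dotProduct_smul, smul_dotProduct, smul_eq_mul,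
      dotProduct_comm u x]
    ring
  have := dotProduct_self_nonneg (x - lam • u)
  rw [le_div_iff₀ hlam0]
  nlinarith

theorem dotProduct_mpinv_mulVec_nonneg (hlam0 : 0 ≤ lam) (x : Fin n → ℝ) :
    0 ≤ x ⬝ᵥ (mpinv S *ᵥ x) :=
  (mul_nonneg hlam0 (dotProduct_self_nonneg _)).trans
    (mul_dotProduct_self_mpinv_mulVec_le hS hSv hlam x)

theorem dotProduct_mpinv_mulVec_bounds (hlam0 : 0 < lam)
    (hker : ∀ x, S *ᵥ x = 0 → ∃ c : ℝ, x = c • v) (x : Fin n → ℝ) :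
    2 * (x ⬝ᵥ x - (v ⬝ᵥ x) ^ 2 / (v ⬝ᵥ v)) - x ⬝ᵥ (S *ᵥ x) ≤ x ⬝ᵥ (mpinv S *ᵥ x) ∧
      x ⬝ᵥ (mpinv S *ᵥ x) ≤ 2 * (x ⬝ᵥ x - (v ⬝ᵥ x) ^ 2 / (v ⬝ᵥ v)) - x ⬝ᵥ (S *ᵥ x) +
        (x - S *ᵥ x) ⬝ᵥ (x - S *ᵥ x) / lam := by
  have hid := dotProduct_mpinv_mulVec_sub_mulVec hS x
  rw [dotProduct_mpinv_mul_mulVec hS hSv hker] at hid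
  have h0 := dotProduct_mpinv_mulVec_nonneg hS hSv hlam hlam0.le (x - S *ᵥ x)
  have h1 := dotProduct_mpinv_mulVec_le hS hSv hlam hlam0 (x - S *ᵥ x)
  constructor <;> linarith

end PseudoinverseQuadraticForm

theorem Conn.eq_of_adj {n : ℕ} {A : Matrix (Fin n) (Fin n) ℝ} (hA : Conn A) {α : Type*}
    {f : Fin n → α} (hf : ∀ j k, A j k ≠ 0 → f j = f k) (j k : Fin n) : f j = f k := by
  induction hA j k with
  | refl => rfl
  | tail _ hab ih => exact ih.trans (hf _ _ hab)

section NormalizedLaplacian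

variable {n : ℕ} {A : Matrix (Fin n) (Fin n) ℝ} {d : Fin n → ℝ}

theorem dhalfInv_mulVec (d x : Fin n → ℝ) : dhalfInv d *ᵥ x = fun j => x j / √(d j) := by
  ext j
  rw [dhalfInv, mulVec_diagonal, one_div_mul_eq_div]

theorem dhalfInv_mul_mul_dhalfInv_apply (d : Fin n → ℝ) (M : Matrix (Fin n) (Fin n) ℝ)
    (j k : Fin n) : (dhalfInv d * M * dhalfInv d) j k = M j k / (√(d j) * √(d k)) := by
  rw [dhalfInv, mul_diagonal, diagonal_mul]
  field_simp

theorem isSymm_dhalfInv_mul_mul_dhalfInv {M : Matrix (Fin n) (Fin n) ℝ} (hM : M.IsSymm) :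
    (dhalfInv d * M * dhalfInv d).IsSymm := by
  rw [IsSymm, transpose_mul, transpose_mul, dhalfInv, diagonal_transpose, hM, Matrix.mul_assoc]

theorem dhalfInv_mul_diagonal_mul_dhalfInv (hd : ∀ i, 0 < d i) :
    dhalfInv d * diagonal d * dhalfInv d = 1 := by
  ext j k
  rw [dhalfInv_mul_mul_dhalfInv_apply]
  rcases eq_or_ne j k with rfl | hjk
  · rw [diagonal_apply_eq, one_apply_eq, Real.mul_self_sqrt (hd j).le, div_self (hd j).ne']
  · rw [diagonal_apply_ne _ hjk, one_apply_ne hjk, zero_div]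

theorem dhalfInv_mul_laplacian_mul_dhalfInv (hd : ∀ i, 0 < d i) :
    dhalfInv d * (diagonal d - A) * dhalfInv d = 1 - dhalfInv d * A * dhalfInv d := by
  rw [Matrix.mul_sub, Matrix.sub_mul, dhalfInv_mul_diagonal_mul_dhalfInv hd]

theorem laplacian_mulVec_apply (hdeg : ∀ i, d i = ∑ j, A i j) (w : Fin n → ℝ) (j : Fin n) :
    ((diagonal d - A) *ᵥ w) j = ∑ k, A j k * (w j - w k) := by
  rw [sub_mulVec, Pi.sub_apply, mulVec_diagonal, hdeg j, mulVec, dotProduct, Finset.sum_mul,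
    ← Finset.sum_sub_distrib]
  exact Finset.sum_congr rfl fun k _ => by ring

theorem dotProduct_laplacian_mulVec (hA : A.IsSymm) (hdeg : ∀ i, d i = ∑ j, A i j)
    (w : Fin n → ℝ) :
    w ⬝ᵥ ((diagonal d - A) *ᵥ w) = (∑ j, ∑ k, A j k * (w j - w k) ^ 2) / 2 := by
  have hL : w ⬝ᵥ ((diagonal d - A) *ᵥ w) = ∑ j, ∑ k, A j k * (w j ^ 2 - w j * w k) := by
    simp only [dotProduct, laplacian_mulVec_apply hdeg, Finset.mul_sum]
    exact Finset.sum_congr rfl fun j _ => Finset.sum_congr rfl fun k _ => by ring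
  have hswap : ∑ j, ∑ k, A j k * w k ^ 2 = ∑ j, ∑ k, A j k * w j ^ 2 := by
    rw [Finset.sum_comm]
    simp only [hA.apply]
  have hexp : ∀ j k, A j k * (w j - w k) ^ 2 =
      2 * (A j k * (w j ^ 2 - w j * w k)) + (A j k * w k ^ 2 - A j k * w j ^ 2) :=
    fun j k => by ring
  simp only [hL, hexp, Finset.sum_add_distrib, Finset.sum_sub_distrib, ← Finset.mul_sum, hswap]
  ring

theorem eq_of_laplacian_mulVec_eq_zero (hA : A.IsSymm) (hnn : ∀ j k, 0 ≤ A j k)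
    (hdeg : ∀ i, d i = ∑ j, A i j) (hconn : Conn A) {w : Fin n → ℝ}
    (hw : (diagonal d - A) *ᵥ w = 0) (j k : Fin n) : w j = w k := by
  have hterm_nonneg : ∀ j k, 0 ≤ A j k * (w j - w k) ^ 2 :=
    fun j k => mul_nonneg (hnn j k) (sq_nonneg _)
  have hsum : ∑ j, ∑ k, A j k * (w j - w k) ^ 2 = 0 := by
    have := dotProduct_laplacian_mulVec hA hdeg w
    rw [hw, dotProduct_zero] at this
    linarith
  refine hconn.eq_of_adj (fun j k hjk => ?_) j k
  have hrow := (Finset.sum_eq_zero_iff_of_nonneg fun j _ =>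
    Finset.sum_nonneg fun k _ => hterm_nonneg j k).mp hsum j (Finset.mem_univ j)
  have hjk0 := (Finset.sum_eq_zero_iff_of_nonneg fun k _ => hterm_nonneg j k).mp hrow k
    (Finset.mem_univ k)
  rcases mul_eq_zero.mp hjk0 with h | h
  · exact absurd h hjk
  · exact sub_eq_zero.mp (pow_eq_zero_iff two_ne_zero |>.mp h)

variable (hd : ∀ i, 0 < d i)
include hd

theorem normalizedLaplacian_mulVec_sqrt (hdeg : ∀ i, d i = ∑ j, A i j) :
    (dhalfInv d * (diagonal d - A) * dhalfInv d) *ᵥ (fun j => √(d j)) = 0 := by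
  have hone : dhalfInv d *ᵥ (fun j => √(d j)) = fun _ => 1 := by
    rw [dhalfInv_mulVec]
    exact funext fun j => div_self (Real.sqrt_pos.mpr (hd j)).ne'
  have hL : (diagonal d - A) *ᵥ (fun _ => (1 : ℝ)) = 0 := by
    ext j
    simp [laplacian_mulVec_apply hdeg]
  rw [← mulVec_mulVec, ← mulVec_mulVec, hone, hL, mulVec_zero]

theorem eq_smul_sqrt_of_normalizedLaplacian_mulVec_eq_zero (hA : A.IsSymm)
    (hnn : ∀ j k, 0 ≤ A j k) (hdeg : ∀ i, d i = ∑ j, A i j) (hconn : Conn A) (i : Fin n)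
    {x : Fin n → ℝ} (hx : (dhalfInv d * (diagonal d - A) * dhalfInv d) *ᵥ x = 0) :
    x = (x i / √(d i)) • fun j => √(d j) := by
  have hsqrt : ∀ j, √(d j) ≠ 0 := fun j => (Real.sqrt_pos.mpr (hd j)).ne'
  have hLw : (diagonal d - A) *ᵥ (dhalfInv d *ᵥ x) = 0 := by
    rw [← mulVec_mulVec, ← mulVec_mulVec, dhalfInv_mulVec] at hx
    ext j
    simpa [hsqrt j] using congrFun hx j
  ext j
  have hw := eq_of_laplacian_mulVec_eq_zero hA hnn hdeg hconn hLw j i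
  simp only [dhalfInv_mulVec] at hw
  rw [Pi.smul_apply, smul_eq_mul, ← hw]
  field_simp [hsqrt j]

theorem normalizedLaplacian_apply_self (hdiag : ∀ i, A i i = 0) (i : Fin n) :
    (dhalfInv d * (diagonal d - A) * dhalfInv d) i i = 1 := by
  rw [dhalfInv_mul_mul_dhalfInv_apply, Matrix.sub_apply, diagonal_apply_eq, hdiag, sub_zero,
    Real.mul_self_sqrt (hd i).le, div_self (hd i).ne']

theorem dotProduct_self_normalizedAdjacency_mulVec_single (hA : A.IsSymm) (i : Fin n) :
    ((dhalfInv d * A * dhalfInv d) *ᵥ Pi.single i 1) ⬝ᵥ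
        ((dhalfInv d * A * dhalfInv d) *ᵥ Pi.single i 1) = (∑ j, A i j ^ 2 / d j) / d i := by
  rw [dotProduct, Finset.sum_div]
  refine Finset.sum_congr rfl fun j _ => ?_
  rw [mulVec_single_one, col_apply, dhalfInv_mul_mul_dhalfInv_apply, hA.apply]
  field_simp
  rw [Real.sq_sqrt (hd j).le, Real.sq_sqrt (hd i).le]

theorem gstar_apply_self (M : Matrix (Fin n) (Fin n) ℝ) (i : Fin n) :
    gstar d M i i = mpinv (dhalfInv d * M * dhalfInv d) i i / d i := by
  rw [gstar, dhalfInv_mul_mul_dhalfInv_apply, Real.mul_self_sqrt (hd i).le]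

theorem mpinv_normalizedLaplacian_apply_self_bounds (hA : A.IsSymm) (hnn : ∀ j k, 0 ≤ A j k)
    (hdiag : ∀ i, A i i = 0) (hdeg : ∀ i, d i = ∑ j, A i j) (hconn : Conn A) {lam : ℝ}
    (hlam0 : 0 < lam)
    (hlam : ∀ y, (fun j => √(d j)) ⬝ᵥ y = 0 →
      lam * (y ⬝ᵥ y) ≤ y ⬝ᵥ ((dhalfInv d * (diagonal d - A) * dhalfInv d) *ᵥ y))
    (i : Fin n) :
    1 - 2 * (d i / ∑ k, d k) ≤ mpinv (dhalfInv d * (diagonal d - A) * dhalfInv d) i i ∧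
      mpinv (dhalfInv d * (diagonal d - A) * dhalfInv d) i i ≤
        1 - 2 * (d i / ∑ k, d k) + (∑ j, A i j ^ 2 / d j) / d i / lam := by
  have hS : (dhalfInv d * (diagonal d - A) * dhalfInv d).IsSymm :=
    isSymm_dhalfInv_mul_mul_dhalfInv <| by rw [IsSymm, transpose_sub, diagonal_transpose, hA]
  obtain ⟨hlo, hhi⟩ := dotProduct_mpinv_mulVec_bounds hS (normalizedLaplacian_mulVec_sqrt hd hdeg)
    hlam hlam0 (fun x hx => ⟨_, eq_smul_sqrt_of_normalizedLaplacian_mulVec_eq_zero hd hA hnn hdeg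
      hconn i hx⟩) (Pi.single i 1)
  have hsub : Pi.single i 1 - (dhalfInv d * (diagonal d - A) * dhalfInv d) *ᵥ Pi.single i 1 =
      (dhalfInv d * A * dhalfInv d) *ᵥ Pi.single i 1 := by
    rw [dhalfInv_mul_laplacian_mul_dhalfInv hd, sub_mulVec, one_mulVec, sub_sub_cancel]
  have hvv : (fun j => √(d j)) ⬝ᵥ (fun j => √(d j)) = ∑ k, d k :=
    Finset.sum_congr rfl fun k _ => Real.mul_self_sqrt (hd k).le
  have he : Pi.single i (1 : ℝ) ⬝ᵥ Pi.single i 1 = 1 := by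
    rw [single_dotProduct, one_mul, Pi.single_eq_same]
  have hve : ((fun j => √(d j)) ⬝ᵥ Pi.single i 1) ^ 2 = d i := by
    rw [dotProduct_single, mul_one, Real.sq_sqrt (hd i).le]
  rw [he, hve, hvv, single_dotProduct_mulVec_single, single_dotProduct_mulVec_single,
    normalizedLaplacian_apply_self hd hdiag] at hlo hhi
  rw [hsub, dotProduct_self_normalizedAdjacency_mulVec_single hd hA] at hhi
  constructor <;> linarith

end NormalizedLaplacian

/-- variance bound for the fixed-effect estimator with homoskedastic errors:
`σ²/dᵢ - 2σ²/m ≤ var(α̂ᵢ) = σ² (L*)ᵢᵢ ≤ (σ²/dᵢ)(1 + 1/(λ₂ hᵢ)) - 2σ²/m`, `m = Σᵢ dᵢ`. -/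
theorem stmt12 {n : ℕ} (A : Matrix (Fin n) (Fin n) ℝ) (hsym : Aᵀ = A)
    (hnn : ∀ i j, 0 ≤ A i j) (hdiag : ∀ i, A i i = 0)
    (d : Fin n → ℝ) (hdeg : ∀ i, d i = ∑ j, A i j) (hdpos : ∀ i, 0 < d i)
    (hconn : Conn A)
    (S : Matrix (Fin n) (Fin n) ℝ)
    (hS : S = 1 - dhalfInv d * A * dhalfInv d)
    (lam2 : ℝ) (hlampos : 0 < lam2)
    (hlam : IsLeast {r : ℝ | ∃ x : Fin n → ℝ, x ≠ 0 ∧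
        (fun i => Real.sqrt (d i)) ⬝ᵥ x = 0 ∧ r = (x ⬝ᵥ (S *ᵥ x)) / (x ⬝ᵥ x)} lam2)
    (h : Fin n → ℝ) (hh : ∀ i, h i = ((d i)⁻¹ * ∑ j, (A i j) ^ 2 / d j)⁻¹)
    (σ2 : ℝ) (hσ : 0 ≤ σ2) (i : Fin n) :
    σ2 / d i - 2 * σ2 / (∑ k, d k) ≤ σ2 * gstar d (Matrix.diagonal d - A) i i ∧
    σ2 * gstar d (Matrix.diagonal d - A) i i ≤
      σ2 / d i * (1 + 1 / (lam2 * h i)) - 2 * σ2 / (∑ k, d k) := by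
  rw [← dhalfInv_mul_laplacian_mul_dhalfInv hdpos] at hS
  subst hS
  obtain ⟨hlo, hhi⟩ := mpinv_normalizedLaplacian_apply_self_bounds hdpos hsym hnn hdiag hdeg hconn
    hlampos (mul_dotProduct_self_le_of_mem_lowerBounds hlam.2) i
  rw [gstar_apply_self hdpos, hh i]
  have hdi := hdpos i
  have hm : 0 < ∑ k, d k := Finset.sum_pos (fun k _ => hdpos k) ⟨i, Finset.mem_univ i⟩
  constructor
  · calc σ2 / d i - 2 * σ2 / ∑ k, d k = σ2 * (1 - 2 * (d i / ∑ k, d k)) / d i := by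
          field_simp
      _ ≤ _ := by rw [mul_div_assoc]; gcongr
  · calc _ ≤ σ2 * (1 - 2 * (d i / ∑ k, d k) + (∑ j, A i j ^ 2 / d j) / d i / lam2) / d i := by
          rw [mul_div_assoc]; gcongr
      _ = _ := by
          field_simp
          ring
end
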